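/- arXiv:2207.07775 — 2 statements merged into one kernel-verified Lean document; each statement's English description precedes it below -/
import Mathlib

section
/- Fix k ≥ 4, a k-critical graph H_0 with h vertices, and a graph H obtained from H_0 by adding t−h pendant edges, where t ≥ (1000kh)^{10}·h^{10k}. Set λ = 1/(2·10^8·h^4·k^4), τ = (1+λ)^{−t}, and d = (1+λ)n/(k−1). Let χ be a 2-coloring of E(K_n) with the minimum number of monochromatic labeled copies of H. Then for all sufficiently large n, the following holds: if S is a set of vertices of K_n each of which has at least d blue neighbors under χ, then the number of blue labeled copies of H_0 with image contained in S is less than τ·(n)_h. -/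
/-
If the blue copies of `H₀` inside `S` numbered at least `τ (n)_h`, each of them would extend,
by sending every pendant vertex to a fresh blue neighbour of its anchor, to at least
`(d - t)^(t-h)` blue copies of `H`. The Turán colouring with `k - 1` classes has no blue `H₀`
(as `χ(H₀) = k`), and a red copy of `H` puts one edge of `H₀` and every pendant edge inside a
single class, so it has at most `n^(h-1) (n/(k-1) + 1)^(t-h+1)` monochromatic copies of `H`.
Since `(1 + λ)^h < k - 1`, the first count beats the second for large `n`, contradicting the
minimality of `χ`.
-/

open Filter

/-- Labeled copies of `F` in coloring `χ` with all edges of color `col`, image in `S`. -/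
noncomputable def colorCopiesIn {α : Type*} [Fintype α] (F : SimpleGraph α)
    {n c : ℕ} (χ : Sym2 (Fin n) → Fin c) (col : Fin c) (S : Set (Fin n)) : ℕ :=
  Set.ncard {f : α → Fin n | Function.Injective f ∧ (∀ v, f v ∈ S) ∧
    ∀ v w, F.Adj v w → χ s(f v, f w) = col}

noncomputable def colorCopies {α : Type*} [Fintype α] (F : SimpleGraph α)
    {n c : ℕ} (χ : Sym2 (Fin n) → Fin c) (col : Fin c) : ℕ :=
  colorCopiesIn F χ col Set.univ

/-- Monochromatic labeled copies of `F` in `χ`. -/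
noncomputable def monoCopies {α : Type*} [Fintype α] (F : SimpleGraph α)
    {n c : ℕ} (χ : Sym2 (Fin n) → Fin c) : ℕ :=
  Set.ncard {f : α → Fin n | Function.Injective f ∧
    ∃ col : Fin c, ∀ v w, F.Adj v w → χ s(f v, f w) = col}

/-- Minimum number of monochromatic labeled copies of `F` over all `c`-colorings of `E(K_n)`. -/
noncomputable def minMono {α : Type*} [Fintype α] (F : SimpleGraph α) (n c : ℕ) : ℕ :=
  ⨅ χ : Sym2 (Fin n) → Fin c, monoCopies F χ

/-- Degree of `v` in color `col`. -/
noncomputable def colorDeg {n c : ℕ} (χ : Sym2 (Fin n) → Fin c) (col : Fin c) (v : Fin n) : ℕ :=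
  Set.ncard {w : Fin n | w ≠ v ∧ χ s(v, w) = col}

/-- `H` is `k`-critical. -/
def IsKCritical {α : Type*} (H : SimpleGraph α) (k : ℕ) : Prop :=
  H.chromaticNumber = (k : ℕ∞) ∧
    ∃ e ∈ H.edgeSet, (H.deleteEdges {e}).chromaticNumber = ((k - 1 : ℕ) : ℕ∞)

/-- Every vertex outside `s` is a pendant vertex whose unique neighbor lies in `s`. -/
def PendantOutside {α : Type*} (H : SimpleGraph α) (s : Finset α) : Prop :=
  ∀ v ∉ s, ∃ w ∈ s, H.neighborSet v = {w}

/-- The Turán coloring of `E(K_n)` with `k-1` parts: edges within parts red (`0`),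
edges between parts blue (`1`). -/
def turanColoring (n k : ℕ) : Sym2 (Fin n) → Fin 2 :=
  Sym2.lift ⟨fun i j => if i.val % (k - 1) = j.val % (k - 1) then 0 else 1,
    fun i j => by
      dsimp only
      by_cases h : i.val % (k - 1) = j.val % (k - 1)
      · rw [if_pos h, if_pos h.symm]
      · rw [if_neg h, if_neg fun h' => h h'.symm]⟩

/-- The parameter `λ = 1/(2·10^8·h^4·k^4)`. -/
noncomputable def lamParam (h k : ℕ) : ℝ := 1 / (2 * 10 ^ 8 * (h : ℝ) ^ 4 * (k : ℝ) ^ 4)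

open Finset Fintype Topology

theorem pow_le_card_injective_piFinset_fin {V : Type*} [DecidableEq V] {r : ℕ} :
    ∀ {j : ℕ} (T : Fin j → Finset V), (∀ i, r + j ≤ #(T i)) →
      r ^ j ≤ #{e ∈ piFinset T | Function.Injective e}
  | 0, T, _ => by simp [Function.injective_of_subsingleton]
  | j + 1, T, hT => by
    set tails := {e ∈ piFinset (Fin.tail T) | Function.Injective e}
    have ih : r ^ j ≤ #tails :=
      pow_le_card_injective_piFinset_fin (Fin.tail T) fun i => by
        have := hT i.succ; simp only [Fin.tail]; omega
    have hfresh (e : Fin j → V) : r ≤ #(T 0 \ univ.image e) := by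
      have := hT 0
      have : #(univ.image e) ≤ j := card_image_le.trans_eq (by simp)
      exact le_trans (by omega) (le_card_sdiff _ _)
    calc r ^ (j + 1) ≤ ∑ _e ∈ tails, r := by
          rw [sum_const, smul_eq_mul, pow_succ]; exact Nat.mul_le_mul_right r ih
      _ ≤ ∑ e ∈ tails, #(T 0 \ univ.image e) := sum_le_sum fun e _ => hfresh e
      _ = #(tails.sigma fun e => T 0 \ univ.image e) := (card_sigma _ _).symm
      _ ≤ _ := by
        refine card_le_card_of_injOn (fun p => Fin.cons p.2 p.1) ?_ ?_
        · rintro ⟨e, x⟩ hp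
          obtain ⟨he, hx⟩ := mem_sigma.mp hp
          obtain ⟨hx, hxe⟩ := mem_sdiff.mp hx
          rw [mem_filter] at he
          simp only [coe_filter, Set.mem_ofPred_eq, Fin.mem_piFinset_iff_zero_tail, Fin.cons_zero,
            Fin.tail_cons, Fin.cons_injective_iff, Set.mem_range]
          exact ⟨⟨hx, he.1⟩, fun ⟨i, hi⟩ => hxe (mem_image.mpr ⟨i, mem_univ i, hi⟩),
            he.2⟩
        · rintro ⟨e, x⟩ - ⟨e', x'⟩ - h
          obtain ⟨rfl, rfl⟩ := Fin.cons_inj.mp h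
          rfl

theorem pow_le_card_injective_piFinset {ι V : Type*} [Fintype ι] [DecidableEq ι] [DecidableEq V]
    (T : ι → Finset V) {r : ℕ} (hT : ∀ i, r + Fintype.card ι ≤ #(T i)) :
    r ^ Fintype.card ι ≤ #{e ∈ piFinset T | Function.Injective e} := by
  set σ := equivFin ι
  calc r ^ Fintype.card ι ≤ #{e ∈ piFinset (T ∘ σ.symm) | Function.Injective e} :=
        pow_le_card_injective_piFinset_fin _ fun i => hT _
    _ ≤ _ := by
      refine card_le_card_of_injOn (fun e => e ∘ σ) ?_ ?_
      · intro e he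
        simp only [coe_filter, mem_piFinset, Function.comp_apply] at he ⊢
        exact ⟨fun i => by simpa using he.1 (σ i), he.2.comp σ.injective⟩
      · rintro e - e' - h
        funext i
        simpa using congrFun h (σ.symm i)

theorem turanColoring_mk (n k : ℕ) (i j : Fin n) :
    turanColoring n k s(i, j) = if (i : ℕ) % (k - 1) = j % (k - 1) then 0 else 1 := rfl

theorem modEq_of_turanColoring_eq_zero {n k : ℕ} {i j : Fin n}
    (h : turanColoring n k s(i, j) = 0) :
    (i : ℕ) ≡ j [MOD k - 1] := by
  by_contra hij
  rw [turanColoring_mk, if_neg (show ¬(i : ℕ) % (k - 1) = j % (k - 1) from hij)] at h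
  exact one_ne_zero h

theorem colorable_of_turanColoring_eq_one {β : Type*} {F : SimpleGraph β} {n k : ℕ} (hk : 1 < k)
    {f : β → Fin n} (hf : ∀ v w, F.Adj v w → turanColoring n k s(f v, f w) = 1) :
    F.Colorable (k - 1) :=
  ⟨SimpleGraph.Coloring.mk (fun v => ⟨f v % (k - 1), Nat.mod_lt _ (by omega)⟩)
    fun {v w} hvw heq => by
      have := hf v w hvw
      rw [turanColoring_mk, if_pos (Fin.val_eq_of_eq heq)] at this
      exact zero_ne_one this⟩

theorem IsKCritical.exists_adj {β : Type*} {G : SimpleGraph β} {k : ℕ} (hG : IsKCritical G k) :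
    ∃ u v, G.Adj u v := by
  obtain ⟨-, e, he, -⟩ := hG
  induction e using Sym2.ind with | _ u v => exact ⟨u, v, he⟩

theorem IsKCritical.not_colorable {β : Type*} {G : SimpleGraph β} {k : ℕ} (hG : IsKCritical G k)
    (hk : 0 < k) : ¬ G.Colorable (k - 1) := fun hcol => by
  have := hcol.chromaticNumber_le
  rw [hG.1, Nat.cast_le] at this
  omega

theorem lamParam_nonneg (h k : ℕ) : 0 ≤ lamParam h k := by
  unfold lamParam; positivity

def IsColorCopy {α : Type*} (F : SimpleGraph α) {n c : ℕ} (χ : Sym2 (Fin n) → Fin c)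
    (col : Fin c) (S : Set (Fin n)) (f : α → Fin n) : Prop :=
  Function.Injective f ∧ (∀ v, f v ∈ S) ∧ ∀ v w, F.Adj v w → χ s(f v, f w) = col

section Copies

variable {α : Type*} {H : SimpleGraph α} {s : Finset α} {n c : ℕ}

theorem PendantOutside.not_adj (hpend : PendantOutside H s) {v w : α}
    (hv : v ∉ s) (hw : w ∉ s) : ¬ H.Adj v w := by
  obtain ⟨u, hu, hN⟩ := hpend v hv
  intro hvw
  have : w ∈ H.neighborSet v := hvw
  rw [hN, Set.mem_singleton_iff] at this
  exact hw (this ▸ hu)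

theorem colorCopies_le_monoCopies [Fintype α] (F : SimpleGraph α) (χ : Sym2 (Fin n) → Fin c)
    (col : Fin c) : colorCopies F χ col ≤ monoCopies F χ :=
  Set.ncard_le_ncard (fun _ ⟨hinj, _, hcol⟩ => ⟨hinj, col, hcol⟩) (Set.toFinite _)

theorem PendantOutside.isColorCopy_glue [DecidableEq α] (hpend : PendantOutside H s)
    {χ : Sym2 (Fin n) → Fin c} {col : Fin c} {S : Set (Fin n)} {g : ↥(s : Set α) → Fin n}
    (hg : IsColorCopy (H.induce (s : Set α)) χ col S g) {e : {v // v ∉ (s : Set α)} → Fin n}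
    (he : Function.Injective e) (hdisj : ∀ x y, e x ≠ g y)
    (hcol : ∀ (x : {v // v ∉ (s : Set α)}) (y : ↥(s : Set α)), H.Adj x y →
      χ s(g y, e x) = col) :
    IsColorCopy H χ col Set.univ
      ((Equiv.piEquivPiSubtypeProd (· ∈ (s : Set α)) fun _ => Fin n).symm (g, e)) := by
  refine ⟨?_, fun _ => trivial, fun v w hvw => ?_⟩
  · exact Function.Injective.dite _ hg.1 he fun h => (hdisj _ _).symm h
  · simp only [Equiv.piEquivPiSubtypeProd_symm_apply]
    split_ifs with hv hw hw
    · exact hg.2.2 ⟨v, hv⟩ ⟨w, hw⟩ hvw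
    · exact hcol ⟨w, hw⟩ ⟨v, hv⟩ hvw.symm
    · rw [Sym2.eq_swap]; exact hcol ⟨v, hv⟩ ⟨w, hw⟩ hvw
    · exact absurd hvw (hpend.not_adj hv hw)

theorem colorDeg_eq_card {χ : Sym2 (Fin n) → Fin c} {col : Fin c} (v : Fin n) :
    colorDeg χ col v = #{w | w ≠ v ∧ χ s(v, w) = col} := by
  rw [colorDeg, Set.ncard_eq_toFinset_card', Set.toFinset_ofPred]

theorem PendantOutside.pow_le_ncard_extensions [Fintype α] (hpend : PendantOutside H s)
    {χ : Sym2 (Fin n) → Fin c} {col : Fin c} {S : Set (Fin n)}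
    {D r : ℕ} (hdeg : ∀ v ∈ S, D ≤ colorDeg χ col v) (hr : r + Fintype.card α ≤ D)
    {g : ↥(s : Set α) → Fin n} (hg : IsColorCopy (H.induce (s : Set α)) χ col S g) :
    r ^ (Fintype.card α - #s) ≤
      {f | IsColorCopy H χ col Set.univ f ∧ (fun v : ↥(s : Set α) => f v) = g}.ncard := by
  classical
  choose w hws hw using id hpend
  let ι := {v // v ∉ (s : Set α)}
  let att (x : ι) : ↥(s : Set α) := ⟨w x x.2, hws x x.2⟩
  let T (x : ι) : Finset (Fin n) :=
    ({y | y ≠ g (att x) ∧ χ s(g (att x), y) = col} : Finset (Fin n)) \ univ.image g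
  have hcardι : Fintype.card ι = Fintype.card α - #s := by
    simp [ι, Fintype.card_subtype_compl]
  calc r ^ (Fintype.card α - #s) ≤ #{e ∈ piFinset T | Function.Injective e} := by
        rw [← hcardι]
        refine pow_le_card_injective_piFinset _ fun x => ?_
        have hD := hdeg _ (hg.2.1 (att x))
        have hs : #(univ.image g) ≤ #s := card_image_le.trans_eq (by simp)
        have hα : #s + Fintype.card ι ≤ Fintype.card α := by
          rw [hcardι]; have := s.card_le_univ; omega
        rw [colorDeg_eq_card] at hD
        exact le_trans (by omega) (le_card_sdiff _ _)
    _ = (↑{e ∈ piFinset T | Function.Injective e} : Set (ι → Fin n)).ncard :=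
        (Set.ncard_coe_finset _).symm
    _ ≤ _ := by
      refine Set.ncard_le_ncard_of_injOn
        (fun e => (Equiv.piEquivPiSubtypeProd (· ∈ (s : Set α)) fun _ => Fin n).symm (g, e))
        ?_ ?_
      · intro e he
        rw [coe_filter, Set.mem_ofPred_eq, mem_piFinset] at he
        have hT (x : ι) := mem_sdiff.mp (he.1 x)
        refine ⟨hpend.isColorCopy_glue hg he.2
          (fun x y hxy => (hT x).2 (hxy ▸ mem_image_of_mem g (mem_univ y))) fun x y hxy => ?_,
          funext fun v => by simp [Equiv.piEquivPiSubtypeProd_symm_apply, v.2]⟩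
        obtain rfl : y = att x := by
          have : (y : α) ∈ H.neighborSet x := hxy
          rw [hw x x.2] at this
          exact Subtype.ext this
        exact (mem_filter.mp (hT x).1).2.2
      · intro e _ e' _ h
        simpa using (Equiv.injective _) h

theorem PendantOutside.colorCopiesIn_induce_mul_pow_le [Fintype α] (hpend : PendantOutside H s)
    (χ : Sym2 (Fin n) → Fin c) (col : Fin c) (S : Set (Fin n))
    {D r : ℕ} (hdeg : ∀ v ∈ S, D ≤ colorDeg χ col v) (hr : r + Fintype.card α ≤ D) :
    colorCopiesIn (H.induce (s : Set α)) χ col S * r ^ (Fintype.card α - #s) ≤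
      colorCopies H χ col := by
  classical
  let restrict (f : α → Fin n) : ↥(s : Set α) → Fin n := fun v => f v
  let base := {g | IsColorCopy (H.induce (s : Set α)) χ col S g}.toFinset
  let copies := {f | IsColorCopy H χ col Set.univ f}.toFinset
  calc colorCopiesIn (H.induce (s : Set α)) χ col S * r ^ (Fintype.card α - #s)
      = ∑ _g ∈ base, r ^ (Fintype.card α - #s) := by
        have hbase : colorCopiesIn (H.induce (s : Set α)) χ col S = #base := by
          rw [colorCopiesIn, ← Set.ncard_coe_finset, Set.coe_toFinset]; rfl
        rw [sum_const, smul_eq_mul, hbase]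
    _ ≤ ∑ g ∈ base, #{f ∈ copies | restrict f = g} := by
        refine sum_le_sum fun g hg => ?_
        rw [Set.mem_toFinset] at hg
        refine (hpend.pow_le_ncard_extensions hdeg hr hg).trans_eq ?_
        rw [← Set.ncard_coe_finset, coe_filter]
        simp [copies, restrict]
    _ = #{f ∈ copies | restrict f ∈ base} := sum_card_fiberwise_eq_card_filter _ _ _
    _ ≤ #copies := card_filter_le _ _
    _ = colorCopies H χ col := by
        rw [colorCopies, colorCopiesIn, ← Set.ncard_coe_finset, Set.coe_toFinset]
        rfl

theorem ncard_le_of_modEq_determined [Fintype α] [DecidableEq α] {m : ℕ}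
    (A : Set (α → Fin n)) (I : Finset α)
    (hI : ∀ v ∈ I, ∃ u ∉ I, ∀ f ∈ A, (f v : ℕ) ≡ f u [MOD m]) :
    A.ncard ≤ n ^ #Iᶜ * (n / m + 1) ^ #I := by
  choose p hpI hp using hI
  -- On `I`, `f` is recovered from the quotient `f v / m` and the residue of `f (p v)`.
  let Φ (f : α → Fin n) : (↥Iᶜ → Fin n) × (↥I → Fin (n / m + 1)) :=
    (fun x => f x, fun x => ⟨f x / m, Nat.lt_succ_of_le (Nat.div_le_div_right (f x).is_lt.le)⟩)
  calc A.ncard ≤ (Set.univ : Set ((↥Iᶜ → Fin n) × (↥I → Fin (n / m + 1)))).ncard := by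
        refine Set.ncard_le_ncard_of_injOn Φ (fun _ _ => trivial)
          fun f hf g hg hfg => funext fun v => ?_
        simp only [Φ, Prod.mk.injEq, funext_iff, Fin.mk.injEq] at hfg
        by_cases hv : v ∈ I
        · have hout := hfg.1 ⟨p v hv, mem_compl.mpr (hpI v hv)⟩
          have hmod : (f v : ℕ) % m = g v % m := by
            rw [hp v hv f hf, hp v hv g hg, hout]
          exact Fin.ext <| by rw [← Nat.div_add_mod (f v) m, ← Nat.div_add_mod (g v) m,
            hfg.2 ⟨v, hv⟩, hmod]
        · exact hfg.1 ⟨v, mem_compl.mpr hv⟩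
    _ = n ^ #Iᶜ * (n / m + 1) ^ #I := by
        simp [Set.ncard_univ, Nat.card_eq_fintype_card, card_compl]

theorem monoCopies_turanColoring_le [Fintype α] (hpend : PendantOutside H s)
    {a b : α} (ha : a ∈ s) (hb : b ∈ s) (hab : H.Adj a b) {k : ℕ} (hk : 1 < k)
    (hχ : ¬ (H.induce (s : Set α)).Colorable (k - 1)) (n : ℕ) :
    monoCopies H (turanColoring n k) ≤
      n ^ (#s - 1) * (n / (k - 1) + 1) ^ (Fintype.card α - #s + 1) := by
  classical
  have hred : monoCopies H (turanColoring n k) ≤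
      {f : α → Fin n | ∀ v w, H.Adj v w → (f v : ℕ) ≡ f w [MOD k - 1]}.ncard := by
    refine Set.ncard_le_ncard (fun f ⟨_, col, hcol⟩ v w hvw => ?_) (Set.toFinite _)
    fin_cases col
    · exact modEq_of_turanColoring_eq_zero (hcol v w hvw)
    · exact absurd (colorable_of_turanColoring_eq_one (f := fun v : ↥(s : Set α) => f v) hk
      fun v w hvw => hcol v w hvw) hχ
  have hba : b ≠ a := hab.ne.symm
  refine hred.trans <|
    le_of_le_of_eq (ncard_le_of_modEq_determined (m := k - 1) _ (insert b sᶜ) ?_) ?_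
  · intro v hv
    have ha' : a ∉ insert b sᶜ := by simp [ha, hba.symm]
    rcases mem_insert.mp hv with rfl | hv
    · exact ⟨a, ha', fun f hf => (hf _ _ hab).symm⟩
    obtain ⟨w, hw, hN⟩ := hpend v (mem_compl.mp hv)
    have hvw : H.Adj v w := by rw [← SimpleGraph.mem_neighborSet, hN]; rfl
    by_cases hwb : w = b
    · subst hwb
      exact ⟨a, ha', fun f hf => (hf _ _ hvw).trans (hf _ _ hab).symm⟩
    · exact ⟨w, by simp [hw, hwb], fun f hf => hf _ _ hvw⟩
  · rw [compl_insert, compl_compl, card_erase_of_mem hb,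
      card_insert_of_notMem (by simp [hb]), card_compl]

theorem PendantOutside.colorCopiesIn_induce_mul_pow_le_of_minimal [Fintype α]
    (hpend : PendantOutside H s) {k : ℕ} (hk : 1 < k)
    (hcrit : IsKCritical (H.induce (s : Set α)) k) {χ : Sym2 (Fin n) → Fin 2}
    (hmin : monoCopies H χ = minMono H n 2) {S : Set (Fin n)} {D r : ℕ}
    (hdeg : ∀ v ∈ S, D ≤ colorDeg χ 1 v) (hr : r + Fintype.card α ≤ D) :
    colorCopiesIn (H.induce (s : Set α)) χ 1 S * r ^ (Fintype.card α - #s) ≤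
      n ^ (#s - 1) * (n / (k - 1) + 1) ^ (Fintype.card α - #s + 1) := by
  obtain ⟨⟨u, hu⟩, ⟨v, hv⟩, huv⟩ := hcrit.exists_adj
  calc _ ≤ colorCopies H χ 1 := hpend.colorCopiesIn_induce_mul_pow_le χ 1 S hdeg hr
    _ ≤ monoCopies H χ := colorCopies_le_monoCopies H χ 1
    _ ≤ monoCopies H (turanColoring n k) := hmin.trans_le (ciInf_le (OrderBot.bddBelow _) _)
    _ ≤ _ := monoCopies_turanColoring_le hpend hu hv huv hk (hcrit.not_colorable (by omega)) n

end Copies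

theorem sub_pow_le_descFactorial {n h : ℕ} (hn : h ≤ n) :
    ((n : ℝ) - h) ^ h ≤ n.descFactorial h := by
  have hsub : (n : ℝ) - h ≤ ((n + 1 - h : ℕ) : ℝ) := by
    rw [Nat.cast_sub (by omega)]; push_cast; linarith
  calc ((n : ℝ) - h) ^ h ≤ ((n + 1 - h : ℕ) : ℝ) ^ h :=
        pow_le_pow_left₀ (sub_nonneg.mpr (by exact_mod_cast hn)) hsub h
    _ ≤ n.descFactorial h := by exact_mod_cast Nat.pow_sub_le_descFactorial n h

theorem one_div_pow_succ_lt_zpow_neg_mul_div_pow {a m : ℝ} {h t : ℕ} (hht : h ≤ t)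
    (ha : 0 < a) (hm : 0 < m) (ham : a ^ h < m) :
    (1 / m) ^ (t - h + 1) < a ^ (-(t : ℤ)) * (a / m) ^ (t - h) := by
  have hsplit : a ^ t = a ^ h * a ^ (t - h) := by rw [← pow_add]; congr 1; omega
  have hrhs : a ^ (-(t : ℤ)) * (a / m) ^ (t - h) = (1 / m) ^ (t - h) * (a ^ h)⁻¹ := by
    simp only [zpow_neg, zpow_natCast, div_pow, one_pow, hsplit]
    field_simp
  rw [hrhs, pow_succ, one_div]
  gcongr

theorem eventually_pow_mul_pow_lt_descFactorial_mul_pow {a m : ℝ} {h t : ℕ} (hh : 1 ≤ h)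
    (hht : h ≤ t) (ha : 0 < a) (hm : 0 < m) (ham : a ^ h < m) :
    ∀ᶠ n : ℕ in atTop, ∀ q r : ℝ, 0 ≤ q → q ≤ n / m + 1 → a * n / m - t ≤ r →
      (n : ℝ) ^ (h - 1) * q ^ (t - h + 1) <
        a ^ (-(t : ℤ)) * n.descFactorial h * r ^ (t - h) := by
  -- Both sides divided by `n ^ t`, as functions of `y = 1 / n`; they compare at `y = 0`
  -- exactly when `a ^ h < m`.
  let F (y : ℝ) := (1 / m + y) ^ (t - h + 1)
  let G (y : ℝ) := a ^ (-(t : ℤ)) * (1 - h * y) ^ h * (a / m - t * y) ^ (t - h)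
  have hFG : F 0 < G 0 := by
    simpa [F, G] using one_div_pow_succ_lt_zpow_neg_mul_div_pow hht ha hm ham
  have hnear : ∀ᶠ y in 𝓝 (0 : ℝ), F y < G y ∧ 0 < 1 - h * y ∧ 0 < a / m - t * y :=
    (ContinuousAt.eventually_lt (by fun_prop) (by fun_prop) hFG).and <|
      (continuousAt_const.eventually_lt (by fun_prop) (by simp)).and
      (continuousAt_const.eventually_lt (by fun_prop) (by simpa using div_pos ha hm))
  filter_upwards [tendsto_one_div_atTop_nhds_zero_nat.eventually hnear, eventually_gt_atTop 0]
    with n ⟨hlt, hhn, htn⟩ hn q r hq0 hq hr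
  have hn : (0 : ℝ) < n := by exact_mod_cast hn
  have hhn : (h : ℝ) ≤ n := by
    rw [mul_one_div, sub_pos, div_lt_one hn] at hhn; exact hhn.le
  have htn : 0 ≤ a * n / m - t := by
    rw [mul_one_div, sub_pos, div_lt_div_iff₀ hn hm] at htn
    rw [sub_nonneg, le_div_iff₀ hm]; linarith
  calc (n : ℝ) ^ (h - 1) * q ^ (t - h + 1)
        ≤ (n : ℝ) ^ (h - 1) * (n / m + 1) ^ (t - h + 1) := by gcongr
    _ = n ^ t * F (1 / n) := by
        rw [show (n : ℝ) / m + 1 = n * (1 / m + 1 / n) by field_simp, mul_pow, ← mul_assoc,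
          ← pow_add, show h - 1 + (t - h + 1) = t by omega]
    _ < n ^ t * G (1 / n) := by gcongr
    _ = a ^ (-(t : ℤ)) * ((n : ℝ) - h) ^ h * (a * n / m - t) ^ (t - h) := by
        have e1 : (n : ℝ) - h = n * (1 - h * (1 / n)) := by field_simp
        have e2 : a * n / m - t = n * (a / m - t * (1 / n)) := by field_simp
        have e3 : (n : ℝ) ^ t = n ^ h * n ^ (t - h) := by rw [← pow_add]; congr 1; omega
        rw [e1, e2, mul_pow, mul_pow, e3]
        ring
    _ ≤ a ^ (-(t : ℤ)) * n.descFactorial h * r ^ (t - h) := by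
        gcongr
        exact sub_pow_le_descFactorial (by exact_mod_cast hhn)

theorem one_add_lamParam_pow_lt {h k : ℕ} (hk : 4 ≤ k) :
    (1 + lamParam h k) ^ h < (k : ℝ) - 1 := by
  have hhl : h * lamParam h k ≤ 1 := by
    have hh4 : (h : ℝ) ≤ h ^ 4 := by exact_mod_cast Nat.le_self_pow (by norm_num) h
    have hk4 : (1 : ℝ) ≤ k ^ 4 := one_le_pow₀ (by exact_mod_cast (by omega : 1 ≤ k))
    rw [lamParam, mul_one_div]
    apply div_le_one_of_le₀ _ (by positivity)
    nlinarith [pow_nonneg (Nat.cast_nonneg h : (0 : ℝ) ≤ h) 4]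
  calc (1 + lamParam h k) ^ h ≤ Real.exp (lamParam h k) ^ h := by
        gcongr
        · linarith [lamParam_nonneg h k]
        · linarith [Real.add_one_le_exp (lamParam h k)]
    _ = Real.exp (h * lamParam h k) := (Real.exp_nat_mul _ _).symm
    _ ≤ Real.exp 1 := Real.exp_le_exp.mpr hhl
    _ < 3 := Real.exp_one_lt_three
    _ ≤ (k : ℝ) - 1 := by
        have : (4 : ℝ) ≤ k := by exact_mod_cast hk
        linarith

theorem statement7_general (k h t : ℕ) (hk : 4 ≤ k)
    (H : SimpleGraph (Fin t)) (s : Finset (Fin t)) (hcard : s.card = h)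
    (hcrit : IsKCritical (H.induce (s : Set (Fin t))) k)
    (hpend : PendantOutside H s) :
    ∃ N : ℕ, ∀ n ≥ N, ∀ χ : Sym2 (Fin n) → Fin 2, monoCopies H χ = minMono H n 2 →
      ∀ S : Set (Fin n),
        (∀ v ∈ S, (1 + lamParam h k) * n / ((k : ℝ) - 1) ≤ (colorDeg χ 1 v : ℝ)) →
        (colorCopiesIn (H.induce (s : Set (Fin t))) χ 1 S : ℝ) <
          (1 + lamParam h k) ^ (-(t : ℤ)) * (n.descFactorial h : ℝ) := by
  have hh : 1 ≤ h := by
    obtain ⟨⟨u, hu⟩, -⟩ := hcrit.exists_adj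
    exact hcard ▸ card_pos.mpr ⟨u, hu⟩
  have hht : h ≤ t := hcard ▸ (card_le_univ s).trans_eq (Fintype.card_fin t)
  have hl : 0 < 1 + lamParam h k := by linarith [lamParam_nonneg h k]
  have hm : (0 : ℝ) < k - 1 := by
    have : (4 : ℝ) ≤ k := by exact_mod_cast hk
    linarith
  obtain ⟨N, hN⟩ := eventually_atTop.mp <|
    (eventually_pow_mul_pow_lt_descFactorial_mul_pow hh hht hl hm (one_add_lamParam_pow_lt hk)).and
      (((tendsto_natCast_atTop_atTop.const_mul_atTop hl).atTop_div_const hm).eventually_ge_atTop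
        (t : ℝ))
  refine ⟨N, fun n hn χ hmin S hS => ?_⟩
  obtain ⟨hlt, htn⟩ := hN n hn
  set D := ⌈(1 + lamParam h k) * n / ((k : ℝ) - 1)⌉₊
  have htD : t ≤ D := Nat.cast_le.mp (htn.trans (Nat.le_ceil _))
  have hcount := hpend.colorCopiesIn_induce_mul_pow_le_of_minimal (by omega) hcrit hmin (r := D - t)
    (fun v hv => Nat.ceil_le.mpr (hS v hv)) (by rw [Fintype.card_fin]; omega)
  rw [Fintype.card_fin, hcard] at hcount
  have hq : ((n / (k - 1) + 1 : ℕ) : ℝ) ≤ n / ((k : ℝ) - 1) + 1 := by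
    have := Nat.cast_div_le (α := ℝ) (m := n) (n := k - 1)
    push_cast [Nat.cast_sub (by omega : 1 ≤ k)] at this ⊢
    linarith
  have hr : (1 + lamParam h k) * n / ((k : ℝ) - 1) - t ≤ ((D - t : ℕ) : ℝ) := by
    rw [Nat.cast_sub htD]; linarith [Nat.le_ceil ((1 + lamParam h k) * n / ((k : ℝ) - 1))]
  by_contra! hge
  exact (hlt _ _ (Nat.cast_nonneg _) hq hr).not_ge <|
    (mul_le_mul_of_nonneg_right hge (by positivity)).trans (by exact_mod_cast hcount)

theorem statement7 (k h t : ℕ) (hk : 4 ≤ k)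
    (H : SimpleGraph (Fin t)) (s : Finset (Fin t)) (hcard : s.card = h)
    (hcrit : IsKCritical (H.induce (s : Set (Fin t))) k)
    (hpend : PendantOutside H s)
    (ht : (1000 * k * h) ^ 10 * h ^ (10 * k) ≤ t) :
    ∃ N : ℕ, ∀ n ≥ N, ∀ χ : Sym2 (Fin n) → Fin 2, monoCopies H χ = minMono H n 2 →
      ∀ S : Set (Fin n),
        (∀ v ∈ S, (1 + lamParam h k) * n / ((k : ℝ) - 1) ≤ (colorDeg χ 1 v : ℝ)) →
        (colorCopiesIn (H.induce (s : Set (Fin t))) χ 1 S : ℝ) <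
          (1 + lamParam h k) ^ (-(t : ℤ)) * (n.descFactorial h : ℝ) :=
  statement7_general k h t hk H s hcard hcrit hpend
end

section
/- Let q ≥ 2, and let H be a connected graph with t vertices whose clique number is k. Then for every n ≥ t, m_q(H,n) ≤ (r_{q−1}(k)−1)^{1−t}·(n)_t, and consequently c_q(H) ≤ (r_{q−1}(k)−1)^{1−t}. -/
/-!
Let `s = r_{q-1}(k) - 1` (finite by the greedy argument) and let `ψ` be a `(q-1)`-colouring of
`K_s` with no monochromatic `K_k`. Split the `n` vertices into `s` classes of size at most
`⌈n/s⌉`, colour the edges inside a class with a new colour and an edge between classes `a ≠ b`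
with `ψ(ab)`. A monochromatic copy of `H` in an old colour would map a `k`-clique of `H` onto a
monochromatic `K_k` of `ψ`; so it uses the new colour and, `H` being connected, lies inside one
class. Hence there are at most `∑_b (m_b)_t ≤ s^{1-t} (n)_t` monochromatic copies. Deleting a
vertex shows that `m_q(H,n)/(n)_t` is nondecreasing in `n`, which gives the limit.
-/

open Filter

/-- The `q`-color Ramsey number of `K_k`: the least `N` such that every `q`-coloring
of `E(K_N)` contains a monochromatic `K_k`. -/
noncomputable def ramseyMulti (q k : ℕ) : ℕ :=
  sInf {N | ∀ χ : Sym2 (Fin N) → Fin q, ∃ col : Fin q, ∃ A : Finset (Fin N),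
    A.card = k ∧ ∀ i ∈ A, ∀ j ∈ A, i ≠ j → χ s(i, j) = col}

open Finset

def HasMonoClique {N c : ℕ} (χ : Sym2 (Fin N) → Fin c) (k : ℕ) : Prop :=
  ∃ col : Fin c, ∃ A : Finset (Fin N), #A = k ∧ ∀ i ∈ A, ∀ j ∈ A, i ≠ j → χ s(i, j) = col

def ramseyBound (c : ℕ) : ℕ → ℕ
  | 0 => 0
  | m + 1 => c * ramseyBound c m + 1

theorem exists_list_pairwise_color_eq {V : Type*} [DecidableEq V] {c : ℕ} (hc : 0 < c)
    (χ : Sym2 V → Fin c) (m : ℕ) (S : Finset V) (hS : ramseyBound c m ≤ #S) :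
    ∃ (l : List V) (col : V → Fin c), l.length = m ∧ (∀ x ∈ l, x ∈ S) ∧
      l.Pairwise (fun a b => a ≠ b ∧ χ s(a, b) = col a) := by
  induction m generalizing S with
  | zero => exact ⟨[], fun _ => ⟨0, hc⟩, rfl, by simp, by simp⟩
  | succ m ih =>
    obtain ⟨v, hv⟩ : S.Nonempty := card_pos.mp (by simp only [ramseyBound] at hS; omega)
    have hrest : c * ramseyBound c m ≤ #(S.erase v) := by
      rw [card_erase_of_mem hv]; simp only [ramseyBound] at hS; omega
    obtain ⟨cl, -, hcl⟩ := exists_le_card_fiber_of_mul_le_card_of_maps_to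
      (f := fun w => χ s(v, w)) (fun _ _ => mem_univ _) ⟨⟨0, hc⟩, mem_univ _⟩ (by simpa using hrest)
    obtain ⟨l, col, hlen, hmem, hpw⟩ := ih _ hcl
    have hne : ∀ x ∈ l, x ≠ v := fun x hx => ne_of_mem_erase (mem_filter.mp (hmem x hx)).1
    refine ⟨v :: l, Function.update col v cl, by simp [hlen], ?_, ?_⟩
    · simp only [List.mem_cons, forall_eq_or_imp]
      exact ⟨hv, fun x hx => mem_of_mem_erase (mem_filter.mp (hmem x hx)).1⟩
    · refine List.Pairwise.cons (fun b hb => ⟨(hne b hb).symm, ?_⟩) (hpw.imp_of_mem ?_)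
      · rw [Function.update_self]
        exact (mem_filter.mp (hmem b hb)).2
      · intro a b ha _ hab
        rwa [Function.update_of_ne (hne a ha)]

theorem exists_forall_hasMonoClique {c : ℕ} (hc : 0 < c) (k : ℕ) :
    ∃ N, ∀ χ : Sym2 (Fin N) → Fin c, HasMonoClique χ k := by
  refine ⟨ramseyBound c (c * (k - 1) + 1), fun χ => ?_⟩
  obtain ⟨l, col, hlen, -, hpw⟩ :=
    exists_list_pairwise_color_eq hc χ (c * (k - 1) + 1) univ (by simp)
  have hcard : #l.toFinset = c * (k - 1) + 1 := by
    rw [List.toFinset_card_of_nodup (hpw.imp fun h => h.1), hlen]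
  obtain ⟨cl, -, hcl⟩ := exists_lt_card_fiber_of_mul_lt_card_of_maps_to
    (s := l.toFinset) (f := col) (t := univ) (n := k - 1) (fun _ _ => mem_univ _)
    (by simp [hcard])
  obtain ⟨A, hAsub, hAcard⟩ := exists_subset_card_eq (s := {x ∈ l.toFinset | col x = cl})
    (n := k) (by omega)
  refine ⟨cl, A, hAcard, fun i hi j hj hij => ?_⟩
  have : Std.Symm (fun a b => χ s(a, b) = col a ∨ χ s(a, b) = col b) :=
    ⟨fun a b h => by rw [Sym2.eq_swap]; exact h.symm⟩
  obtain ⟨hil, hi⟩ := mem_filter.mp (hAsub hi)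
  obtain ⟨hjl, hj⟩ := mem_filter.mp (hAsub hj)
  rcases (hpw.imp (S := fun a b => χ s(a, b) = col a ∨ χ s(a, b) = col b)
    fun h => Or.inl h.2).forall (List.mem_toFinset.mp hil)
    (List.mem_toFinset.mp hjl) hij with h | h
  · rw [h, hi]
  · rw [h, hj]

theorem forall_hasMonoClique_ramseyMulti {c : ℕ} (hc : 0 < c) (k : ℕ) :
    ∀ χ : Sym2 (Fin (ramseyMulti c k)) → Fin c, HasMonoClique χ k :=
  Nat.sInf_mem (exists_forall_hasMonoClique hc k)

theorem le_ramseyMulti {c : ℕ} (hc : 0 < c) (k : ℕ) : k ≤ ramseyMulti c k := by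
  obtain ⟨_, A, hA, -⟩ := forall_hasMonoClique_ramseyMulti hc k fun _ => ⟨0, hc⟩
  simpa [hA] using A.card_le_univ

theorem exists_not_hasMonoClique_of_lt_ramseyMulti {c k N : ℕ} (h : N < ramseyMulti c k) :
    ∃ ψ : Sym2 (Fin N) → Fin c, ¬ HasMonoClique ψ k := by
  unfold HasMonoClique
  simpa only [Set.mem_ofPred_eq, not_forall] using Nat.notMem_of_lt_sInf h

theorem SimpleGraph.Preconnected.apply_eq_of_forall_adj {α β : Type*} {G : SimpleGraph α}
    (hG : G.Preconnected) {g : α → β} (hg : ∀ v w, G.Adj v w → g v = g w) (v w : α) :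
    g v = g w := by
  obtain ⟨p⟩ := hG v w
  induction p with
  | nil => rfl
  | cons h _ ih => exact (hg _ _ h).trans ih

theorem two_le_of_connected_of_cliqueFree {α : Type*} [Nontrivial α] {H : SimpleGraph α}
    (hH : H.Connected) {k : ℕ} (hk : H.CliqueFree (k + 1)) : 2 ≤ k := by
  by_contra! h
  have hbot : H = ⊥ := SimpleGraph.cliqueFree_two.mp (hk.mono (by omega))
  exact SimpleGraph.not_connected_bot (hbot ▸ hH)

theorem ncard_injective_forall_le {α V : Type*} [Fintype α] [Fintype V] (P : V → Prop)
    [DecidablePred P] :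
    {f : α → V | Function.Injective f ∧ ∀ v, P (f v)}.ncard ≤
      (#{x | P x}).descFactorial (Fintype.card α) := by
  rw [← Fintype.card_subtype, ← Fintype.card_embedding_eq, ← Nat.card_eq_fintype_card,
    ← Nat.card_coe_set_eq]
  refine Nat.card_le_card_of_injective
    (fun f => ⟨fun v => ⟨f.1 v, f.2.2 v⟩, fun v w h => f.2.1 (congrArg Subtype.val h)⟩) ?_
  intro f g h
  exact Subtype.ext (funext fun v => congrArg Subtype.val (DFunLike.congr_fun h v))

theorem minMono_le_monoCopies {α : Type*} [Fintype α] (H : SimpleGraph α) {n c : ℕ}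
    (χ : Sym2 (Fin n) → Fin c) : minMono H n c ≤ monoCopies H χ :=
  ciInf_le (OrderBot.bddBelow _) χ

theorem monoCopies_le_descFactorial {α : Type*} [Fintype α] (H : SimpleGraph α) {n c : ℕ}
    (χ : Sym2 (Fin n) → Fin c) : monoCopies H χ ≤ n.descFactorial (Fintype.card α) :=
  calc monoCopies H χ ≤ {f : α → Fin n | Function.Injective f ∧ ∀ _ : α, True}.ncard :=
        Set.ncard_le_ncard (fun f hf => ⟨hf.1, fun _ => trivial⟩) (Set.toFinite _)
    _ ≤ n.descFactorial (Fintype.card α) := by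
        simpa using ncard_injective_forall_le (α := α) (V := Fin n) fun _ => True

section Blowup

variable {V : Type*} {s c : ℕ}

def blowupColoring (p : V → Fin s) (ψ : Sym2 (Fin s) → Fin c) (e : Sym2 V) : Fin (c + 1) :=
  if (e.map p).IsDiag then 0 else (ψ (e.map p)).succ

variable (p : V → Fin s) (ψ : Sym2 (Fin s) → Fin c)

theorem blowupColoring_mk (i j : V) :
    blowupColoring p ψ s(i, j) = if p i = p j then 0 else (ψ s(p i, p j)).succ := by
  simp [blowupColoring]

theorem eq_of_blowupColoring_eq_zero {i j : V} (h : blowupColoring p ψ s(i, j) = 0) :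
    p i = p j := by
  by_contra hne
  simp [blowupColoring_mk, hne] at h

theorem blowupColoring_eq_succ {i j : V} {col : Fin c}
    (h : blowupColoring p ψ s(i, j) = col.succ) : p i ≠ p j ∧ ψ s(p i, p j) = col := by
  by_cases hij : p i = p j
  · simp only [blowupColoring_mk, hij, if_true] at h
    exact absurd h.symm (Fin.succ_ne_zero col)
  · simpa [blowupColoring_mk, hij] using h

variable {α : Type*} {H : SimpleGraph α} {f : α → V} {col : Fin (c + 1)}

theorem color_eq_zero_of_isNClique {k : ℕ} {A : Finset α} (hA : H.IsNClique k A)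
    (hψ : ¬ HasMonoClique ψ k) (hf : ∀ v w, H.Adj v w → blowupColoring p ψ s(f v, f w) = col) :
    col = 0 := by
  classical
  by_contra hcol
  obtain ⟨c', rfl⟩ := Fin.exists_succ_eq_of_ne_zero hcol
  have hAdj : ∀ v ∈ A, ∀ w ∈ A, v ≠ w → p (f v) ≠ p (f w) ∧ ψ s(p (f v), p (f w)) = c' :=
    fun v hv w hw hvw => blowupColoring_eq_succ p ψ (hf v w (hA.1 hv hw hvw))
  refine hψ ⟨c', A.image (p ∘ f), ?_, ?_⟩
  · rw [card_image_of_injOn, hA.2]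
    intro v hv w hw hvw
    by_contra hne
    exact (hAdj v hv w hw hne).1 hvw
  · simp only [mem_image, Function.comp_apply]
    rintro _ ⟨v, hv, rfl⟩ _ ⟨w, hw, rfl⟩ hne
    exact (hAdj v hv w hw fun h => hne (h ▸ rfl)).2

theorem apply_eq_of_color_eq_zero (hH : H.Preconnected)
    (hf : ∀ v w, H.Adj v w → blowupColoring p ψ s(f v, f w) = 0) (v w : α) :
    p (f v) = p (f w) :=
  hH.apply_eq_of_forall_adj (g := p ∘ f)
    (fun v w hvw => eq_of_blowupColoring_eq_zero p ψ (hf v w hvw)) v w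

end Blowup

theorem monoCopies_blowupColoring_le {α : Type*} [Fintype α] {H : SimpleGraph α}
    (hH : H.Connected) {k : ℕ} {A : Finset α} (hA : H.IsNClique k A) {n s c : ℕ}
    (p : Fin n → Fin s) {ψ : Sym2 (Fin s) → Fin c} (hψ : ¬ HasMonoClique ψ k) :
    monoCopies H (blowupColoring p ψ) ≤
      ∑ b, (#{i | p i = b}).descFactorial (Fintype.card α) := by
  obtain ⟨v₀⟩ := hH.nonempty
  have hsub : {f : α → Fin n | Function.Injective f ∧
      ∃ col, ∀ v w, H.Adj v w → blowupColoring p ψ s(f v, f w) = col} ⊆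
      ⋃ b, {f | Function.Injective f ∧ ∀ v, p (f v) = b} := by
    rintro f ⟨hinj, col, hcol⟩
    obtain rfl := color_eq_zero_of_isNClique p ψ hA hψ hcol
    exact Set.mem_iUnion.mpr ⟨p (f v₀), hinj,
      fun v => apply_eq_of_color_eq_zero p ψ hH.preconnected hcol v v₀⟩
  calc monoCopies H (blowupColoring p ψ)
      ≤ (⋃ b, {f : α → Fin n | Function.Injective f ∧ ∀ v, p (f v) = b}).ncard :=
        Set.ncard_le_ncard hsub (Set.toFinite _)
    _ ≤ ∑ b, {f : α → Fin n | Function.Injective f ∧ ∀ v, p (f v) = b}.ncard :=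
        Set.ncard_iUnion_le_of_fintype _
    _ ≤ _ := sum_le_sum fun b _ => ncard_injective_forall_le (p · = b)

theorem mul_sub_le_sub_of_mul_lt_add {s m n t : ℕ} (h : s * m < n + s) (ht : 1 ≤ t) :
    s * (m - t) ≤ n - t := by
  rcases le_or_gt m t with hmt | hmt
  · simp [Nat.sub_eq_zero_of_le hmt]
  obtain ⟨d, rfl⟩ := Nat.exists_eq_add_of_lt hmt
  rcases Nat.eq_zero_or_pos s with rfl | hs
  · simp
  have : s + t ≤ s * t + 1 := by nlinarith
  have hsplit : s * (t + d + 1) = s * t + s * (d + 1) := by ring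
  rw [show t + d + 1 - t = d + 1 by omega]
  omega

/-- `hm` says `m b ≤ ⌈n / #ι⌉`. -/
theorem pow_mul_sum_descFactorial_le {ι : Type*} [Fintype ι] {m : ι → ℕ} {n : ℕ}
    (hsum : ∑ b, m b = n) (hm : ∀ b, Fintype.card ι * m b < n + Fintype.card ι) (t : ℕ) :
    Fintype.card ι ^ t * ∑ b, (m b).descFactorial (t + 1) ≤ n.descFactorial (t + 1) := by
  set s := Fintype.card ι
  induction t with
  | zero => simp [hsum]
  | succ t ih =>
    have hstep (b : ι) :
        s * (m b).descFactorial (t + 2) ≤ (n - (t + 1)) * (m b).descFactorial (t + 1) := by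
      rw [Nat.descFactorial_succ, ← Nat.mul_assoc]
      exact Nat.mul_le_mul_right _ (mul_sub_le_sub_of_mul_lt_add (hm b) (by omega))
    calc s ^ (t + 1) * ∑ b, (m b).descFactorial (t + 2)
        = s ^ t * ∑ b, s * (m b).descFactorial (t + 2) := by rw [← mul_sum, pow_succ, mul_assoc]
      _ ≤ s ^ t * ∑ b, (n - (t + 1)) * (m b).descFactorial (t + 1) :=
          Nat.mul_le_mul_left _ (sum_le_sum fun b _ => hstep b)
      _ = (n - (t + 1)) * (s ^ t * ∑ b, (m b).descFactorial (t + 1)) := by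
          rw [← mul_sum]; ring
      _ ≤ (n - (t + 1)) * n.descFactorial (t + 1) := Nat.mul_le_mul_left _ ih
      _ = n.descFactorial (t + 2) := (Nat.descFactorial_succ _ _).symm

theorem mul_card_filter_mod_eq_lt {n s : ℕ} (hs : 0 < s) (b : ℕ) :
    s * #{i : Fin n | i.val % s = b} < n + s := by
  set M := (n + s - 1) / s
  have hcard : #{i : Fin n | i.val % s = b} ≤ M := by
    have hM : n + s - 1 < M * s + s := Nat.lt_div_mul_add hs
    simpa using card_le_card_of_injOn (t := range M) (fun i : Fin n => i.val / s)
      (fun i _ => mem_range.mpr ((Nat.div_lt_iff_lt_mul hs).mpr (by omega)))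
      (fun i hi j hj hij => Fin.ext <| by
        simp only [coe_filter, mem_univ, true_and, Set.mem_ofPred_eq] at hi hj
        rw [← Nat.div_add_mod i.val s, ← Nat.div_add_mod j.val s, hi, hj]
        exact congrArg (s * · + b) hij)
  calc s * #{i : Fin n | i.val % s = b} ≤ s * M := Nat.mul_le_mul_left _ hcard
    _ ≤ n + s - 1 := Nat.mul_div_le _ _
    _ < n + s := by omega

theorem pow_mul_minMono_le {α : Type*} [Fintype α] {H : SimpleGraph α} (hH : H.Connected)
    {k : ℕ} {A : Finset α} (hA : H.IsNClique k A) {s c : ℕ} (hs : 0 < s)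
    {ψ : Sym2 (Fin s) → Fin c} (hψ : ¬ HasMonoClique ψ k) (n : ℕ) :
    s ^ (Fintype.card α - 1) * minMono H n (c + 1) ≤ n.descFactorial (Fintype.card α) := by
  set p : Fin n → Fin s := fun i => ⟨i.val % s, Nat.mod_lt _ hs⟩
  have hcard : Fintype.card α = Fintype.card α - 1 + 1 := by
    have := Fintype.card_pos_iff.mpr hH.nonempty
    omega
  have hsum : ∑ b, #{i | p i = b} = n := by
    simpa using (card_eq_sum_card_fiberwise (s := univ) (t := univ) (f := p)
      fun _ _ => mem_univ _).symm
  have hfiber (b : Fin s) : s * #{i | p i = b} < n + s := by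
    simpa [p, Fin.ext_iff] using mul_card_filter_mod_eq_lt (n := n) hs b
  calc s ^ (Fintype.card α - 1) * minMono H n (c + 1)
      ≤ s ^ (Fintype.card α - 1) * ∑ b, (#{i | p i = b}).descFactorial (Fintype.card α) :=
        Nat.mul_le_mul_left _ ((minMono_le_monoCopies H _).trans
          (monoCopies_blowupColoring_le hH hA p hψ))
    _ ≤ n.descFactorial (Fintype.card α) := by
        rw [hcard]
        simpa using pow_mul_sum_descFactorial_le hsum (by simpa using hfiber) _

theorem sum_ncard_forall_ne {β γ : Type*} [Fintype β] [Fintype γ] (S : Set (β → γ))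
    (hS : ∀ f ∈ S, Function.Injective f) :
    ∑ x, {f ∈ S | ∀ v, f v ≠ x}.ncard = (Fintype.card γ - Fintype.card β) * S.ncard := by
  classical
  obtain ⟨T, rfl⟩ := S.toFinite.exists_finset_coe
  have hdouble := sum_card_bipartiteAbove_eq_sum_card_bipartiteBelow (s := univ) (t := T)
    (r := fun x f => ∀ v, f v ≠ x)
  have havoid : ∀ f ∈ T, #{x | ∀ v, f v ≠ x} = Fintype.card γ - Fintype.card β := by
    intro f hf
    have : ({x | ∀ v, f v ≠ x} : Finset γ) = (univ.image f)ᶜ := by ext; simp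
    rw [this, card_compl, card_image_of_injective _ (hS f hf), card_univ]
  have hcoe (x : γ) : {f ∈ (T : Set (β → γ)) | ∀ v, f v ≠ x}.ncard = #{f ∈ T | ∀ v, f v ≠ x} := by
    rw [← Set.ncard_coe_finset, coe_filter]; rfl
  simp only [bipartiteAbove, bipartiteBelow] at hdouble
  rw [Set.ncard_coe_finset, sum_congr rfl fun x _ => hcoe x, hdouble, sum_const_nat havoid,
    mul_comm]

theorem minMono_le_ncard_forall_ne {α : Type*} [Fintype α] (H : SimpleGraph α) {n c : ℕ}
    (χ : Sym2 (Fin (n + 1)) → Fin c) (x : Fin (n + 1)) :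
    minMono H n c ≤ {f ∈ {f : α → Fin (n + 1) | Function.Injective f ∧
      ∃ col, ∀ v w, H.Adj v w → χ s(f v, f w) = col} | ∀ v, f v ≠ x}.ncard := by
  refine (minMono_le_monoCopies H (fun e => χ (e.map x.succAbove))).trans ?_
  refine Set.ncard_le_ncard_of_injOn (x.succAbove ∘ ·) ?_
    (fun f _ g _ h => funext fun v => Fin.succAbove_right_injective (congrFun h v))
  rintro f ⟨hinj, col, hcol⟩
  exact ⟨⟨Fin.succAbove_right_injective.comp hinj, col, fun v w h => by simpa using hcol v w h⟩,
    fun v => Fin.succAbove_ne x (f v)⟩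

/-- Averaging over the deleted vertex of an optimal colouring of `K_{n+1}`. -/
theorem succ_mul_minMono_le {α : Type*} [Fintype α] (H : SimpleGraph α) {n c : ℕ} (hc : 0 < c) :
    (n + 1) * minMono H n c ≤ (n + 1 - Fintype.card α) * minMono H (n + 1) c := by
  have : Nonempty (Sym2 (Fin (n + 1)) → Fin c) := ⟨fun _ => ⟨0, hc⟩⟩
  obtain ⟨χ, hχ⟩ := exists_eq_ciInf_of_finite (f := fun χ : Sym2 (Fin (n + 1)) → Fin c =>
    monoCopies H χ)
  calc (n + 1) * minMono H n c = ∑ _x : Fin (n + 1), minMono H n c := by simp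
    _ ≤ _ := sum_le_sum fun x _ => minMono_le_ncard_forall_ne H χ x
    _ = (n + 1 - Fintype.card α) * minMono H (n + 1) c := by
        rw [sum_ncard_forall_ne _ fun f hf => hf.1, Fintype.card_fin]
        exact congrArg _ hχ

theorem minMono_div_descFactorial_le_succ {α : Type*} [Fintype α] (H : SimpleGraph α)
    {n c : ℕ} (hc : 0 < c) (hn : Fintype.card α ≤ n) :
    (minMono H n c : ℝ) / n.descFactorial (Fintype.card α) ≤
      minMono H (n + 1) c / (n + 1).descFactorial (Fintype.card α) := by
  set t := Fintype.card α
  have hpos : 0 < n + 1 - t := by omega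
  have hcross : minMono H n c * (n + 1).descFactorial t ≤
      minMono H (n + 1) c * n.descFactorial t := by
    refine Nat.le_of_mul_le_mul_left ?_ hpos
    calc (n + 1 - t) * (minMono H n c * (n + 1).descFactorial t)
        = (n + 1) * minMono H n c * n.descFactorial t := by
          rw [mul_left_comm, Nat.succ_descFactorial]; ring
      _ ≤ (n + 1 - t) * minMono H (n + 1) c * n.descFactorial t :=
          Nat.mul_le_mul_right _ (succ_mul_minMono_le H hc)
      _ = (n + 1 - t) * (minMono H (n + 1) c * n.descFactorial t) := by ring
  rw [div_le_div_iff₀ (by exact_mod_cast Nat.descFactorial_pos.mpr hn)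
    (by exact_mod_cast Nat.descFactorial_pos.mpr (by omega))]
  exact_mod_cast hcross

theorem le_zpow_mul_of_pow_mul_le {s t a d : ℕ} (hs : 0 < s) (ht : 1 ≤ t)
    (h : s ^ (t - 1) * a ≤ d) : (a : ℝ) ≤ (s : ℝ) ^ ((1 : ℤ) - t) * d := by
  have hexp : (1 : ℤ) - t = -((t - 1 : ℕ) : ℤ) := by omega
  rw [hexp, zpow_neg, zpow_natCast, inv_mul_eq_div, le_div_iff₀ (by positivity), mul_comm]
  exact_mod_cast h

theorem exists_tendsto_le_of_monotone_add {u : ℕ → ℝ} {C : ℝ} (t : ℕ)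
    (hmono : Monotone fun j => u (j + t)) (hC : ∀ j, u (j + t) ≤ C) :
    ∃ L, Tendsto u atTop (nhds L) ∧ L ≤ C :=
  ⟨⨆ j, u (j + t), (tendsto_add_atTop_iff_nat t).mp
    (tendsto_atTop_ciSup hmono ⟨C, by rintro _ ⟨j, rfl⟩; exact hC j⟩), ciSup_le hC⟩

theorem statement14 (q t k : ℕ) (hq : 2 ≤ q) (H : SimpleGraph (Fin t))
    (hconn : H.Connected)
    (hclique : (∃ A : Finset (Fin t), H.IsNClique k A) ∧
      ∀ A : Finset (Fin t), ¬ H.IsNClique (k + 1) A) :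
    (∀ n : ℕ, t ≤ n → (minMono H n q : ℝ) ≤
      ((ramseyMulti (q - 1) k : ℝ) - 1) ^ ((1 : ℤ) - (t : ℤ)) * (n.descFactorial t : ℝ)) ∧
    ∃ L : ℝ,
      Tendsto (fun n : ℕ => (minMono H n q : ℝ) / (n.descFactorial t : ℝ)) atTop (nhds L) ∧
      L ≤ ((ramseyMulti (q - 1) k : ℝ) - 1) ^ ((1 : ℤ) - (t : ℤ)) := by
  have ht : 1 ≤ t := Fin.pos_iff_nonempty.mpr hconn.nonempty
  have hbound (n : ℕ) : (minMono H n q : ℝ) ≤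
      ((ramseyMulti (q - 1) k : ℝ) - 1) ^ ((1 : ℤ) - (t : ℤ)) * (n.descFactorial t : ℝ) := by
    obtain ⟨c, rfl⟩ : ∃ c, q = c + 1 := ⟨q - 1, by omega⟩
    rcases ht.eq_or_lt with rfl | ht2
    · simpa using (minMono_le_monoCopies H fun _ => (0 : Fin (c + 1))).trans
        (monoCopies_le_descFactorial H _)
    have : Nontrivial (Fin t) := Fin.nontrivial_iff_two_le.mpr ht2
    have hk := two_le_of_connected_of_cliqueFree hconn hclique.2
    obtain ⟨A, hA⟩ := hclique.1
    have hr := le_ramseyMulti (by omega : 0 < c) k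
    obtain ⟨ψ, hψ⟩ := exists_not_hasMonoClique_of_lt_ramseyMulti
      (by omega : ramseyMulti c k - 1 < ramseyMulti c k)
    have key := pow_mul_minMono_le hconn hA (by omega) hψ n
    rw [Fintype.card_fin] at key
    simpa [Nat.cast_sub (by omega : 1 ≤ ramseyMulti c k)] using
      le_zpow_mul_of_pow_mul_le (by omega) ht key
  refine ⟨fun n _ => hbound n, exists_tendsto_le_of_monotone_add t ?_ fun j => ?_⟩
  · refine monotone_nat_of_le_succ fun j => ?_
    simpa [add_right_comm j 1 t] using
      minMono_div_descFactorial_le_succ H (n := j + t) (by omega) (by simp)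
  · rw [div_le_iff₀ (by exact_mod_cast Nat.descFactorial_pos.mpr (by omega))]
    exact hbound (j + t)
end
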